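/- Suppose f : E → ℝ is locally Lipschitz and is a strong C² max function at x̄ with data f₁, …, f_n. Then there exists δ > 0 such that for every point x of the active manifold M with ‖x − x̄‖ ≤ δ, the following holds: letting T(x) := {v ∈ E : ⟨v, ∇f_i(x) − ∇f_j(x)⟩ = 0 for all i, j} the orthogonal projection of ∇f_i(x) onto T(x) is the same vector p for every index i, this vector p belongs to convexHull{∇f_i(x) : 1 ≤ i ≤ n}, and p is the unique element of minimal norm of convexHull{∇f_i(x) : 1 ≤ i ≤ n} (i.e. p = p(x)). (The vector p is the Riemannian gradient of the restriction of f to M at x.) -/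

import Mathlib

/-!
Near `xbar` the gradients `gᵢ(x) = ∇Fᵢ(x)` stay affinely independent, so the foot `p(x)` of the
perpendicular from `0` to their affine span has unique affine weights, which solve a linear
system invertible at `xbar` and hence depend continuously on `x`. At `xbar` the foot is `0`, whose
weights are positive because `0` lies in the relative interior of the simplex; so the weights stay
positive and `p(x)` lies in the convex hull. Being orthogonal to every `gᵢ - gⱼ`, `p(x)` is the
projection of each `gᵢ` onto `T(x)`, and `⟪p, w⟫ = ‖p‖²` on the hull makes it the unique element of
minimal norm there.
-/

open Filter Topology Metric Set
open scoped Classical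

variable {E : Type*} [NormedAddCommGroup E] [InnerProductSpace ℝ E] [FiniteDimensional ℝ E]

/-- The Clarke subdifferential: the closed convex hull of all limits of gradients
along sequences of points of differentiability converging to `x`. -/
noncomputable def clarkeSubdiff (f : E → ℝ) (x : E) : Set E :=
  closure (convexHull ℝ {v : E | ∃ u : ℕ → E,
    (∀ n, DifferentiableAt ℝ f (u n)) ∧
    Tendsto u atTop (𝓝 x) ∧
    Tendsto (fun n => gradient f (u n)) atTop (𝓝 v)})

/-- The Goldstein subdifferential of radius `ε`. -/
noncomputable def goldsteinSubdiff (f : E → ℝ) (x : E) (ε : ℝ) : Set E :=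
  convexHull ℝ (⋃ y ∈ Metric.closedBall x ε, clarkeSubdiff f y)

/-- The element of minimal norm of a set (junk value `0` if no minimizer exists). -/
noncomputable def minNorm (s : Set E) : E :=
  if h : ∃ v, v ∈ s ∧ ∀ w ∈ s, ‖v‖ ≤ ‖w‖ then h.choose else 0

/-- The Goldstein subgradient: the minimal-norm element of the Goldstein subdifferential. -/
noncomputable def goldsteinGrad (f : E → ℝ) (x : E) (ε : ℝ) : E :=
  minNorm (goldsteinSubdiff f x ε)

/-- The Goldstein modulus `Γf(x) = inf {ε ≥ 0 : ‖g_ε(x)‖ ≤ ε}`. -/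
noncomputable def goldsteinModulus (f : E → ℝ) (x : E) : ℝ :=
  sInf {ε : ℝ | 0 ≤ ε ∧ ‖goldsteinGrad f x ε‖ ≤ ε}

open scoped RealInnerProductSpace

/-- `f` is a strong `C²` max function at `xbar` with data `F 0, …, F n`. -/
def IsStrongC2MaxAt (f : E → ℝ) (xbar : E) {n : ℕ} (F : Fin (n + 1) → E → ℝ) : Prop :=
  (∀ i, ContDiff ℝ 2 (F i)) ∧
  (∃ ρ > 0, ∀ x : E, ‖x - xbar‖ ≤ ρ →
      f x = Finset.univ.sup' Finset.univ_nonempty (fun i => F i x)) ∧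
  (∀ i j, F i xbar = F j xbar) ∧
  AffineIndependent ℝ (fun i => gradient (F i) xbar) ∧
  (0 : E) ∈ intrinsicInterior ℝ (convexHull ℝ (Set.range fun i => gradient (F i) xbar)) ∧
  (∃ δ > 0, ∃ ρ' > 0, ∀ x : E, ‖x - xbar‖ ≤ ρ' → f x - f xbar ≥ δ / 2 * ‖x - xbar‖ ^ 2)

/-- The subspace `T(x)` orthogonal to all the gradient differences. -/
noncomputable def tangentSpaceOf {m : ℕ} (g : Fin m → E) : Submodule ℝ E where
  carrier := {v : E | ∀ i j, ⟪v, g i - g j⟫ = 0}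
  add_mem' := by
    intro a b ha hb i j
    rw [inner_add_left, ha i j, hb i j, add_zero]
  zero_mem' := by
    intro i j
    exact inner_zero_left _
  smul_mem' := by
    intro c a ha i j
    rw [real_inner_smul_left, ha i j, mul_zero]

theorem convexHull_range_eq_image_stdSimplex {ι : Type*} [Fintype ι] [DecidableEq ι] {V : Type*}
    [AddCommGroup V] [Module ℝ V] (v : ι → V) :
    convexHull ℝ (range v) = (fun w : ι → ℝ => ∑ i, w i • v i) '' stdSimplex ℝ ι := by
  have : (fun w : ι → ℝ => ∑ i, w i • v i) = Fintype.linearCombination ℝ v := by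
    ext w; simp [Fintype.linearCombination_apply]
  rw [← convexHull_basis_eq_stdSimplex, this, LinearMap.image_convexHull, ← Set.range_comp]
  congr 2
  ext i
  simp [Fintype.linearCombination_apply]

theorem eventually_smul_mem_of_zero_mem_intrinsicInterior {V : Type*} [NormedAddCommGroup V]
    [NormedSpace ℝ V] {s : Set V} (h0 : (0 : V) ∈ intrinsicInterior ℝ s) {v : V}
    (hv : v ∈ affineSpan ℝ s) : ∀ᶠ t in 𝓝 (0 : ℝ), t • v ∈ s := by
  obtain ⟨y, hy, hy0⟩ := mem_intrinsicInterior.1 h0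
  have hspan (t : ℝ) : t • v ∈ affineSpan ℝ s := by
    simpa [hy0] using AffineSubspace.smul_vsub_vadd_mem _ t hv y.2 y.2
  have hpath : Continuous fun t : ℝ => (⟨t • v, hspan t⟩ : affineSpan ℝ s) :=
    (continuous_id.smul continuous_const).subtype_mk _
  have hy' : (⟨(0 : ℝ) • v, hspan 0⟩ : affineSpan ℝ s) = y := by ext; simp [hy0]
  exact (hpath.tendsto 0).eventually_mem (hy' ▸ mem_interior_iff_mem_nhds.1 hy)

theorem AffineIndependent.exists_pos_weights_of_zero_mem_intrinsicInterior {ι : Type*}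
    [Fintype ι] [DecidableEq ι] {V : Type*} [NormedAddCommGroup V] [NormedSpace ℝ V] {v : ι → V}
    (hv : AffineIndependent ℝ v)
    (h0 : (0 : V) ∈ intrinsicInterior ℝ (convexHull ℝ (range v))) :
    ∃ c : ι → ℝ, (∀ i, 0 < c i) ∧ ∑ i, c i = 1 ∧ ∑ i, c i • v i = 0 := by
  obtain ⟨c, ⟨hc0, hc1⟩, hcv⟩ :=
    convexHull_range_eq_image_stdSimplex v ▸ intrinsicInterior_subset h0
  refine ⟨c, fun k => ?_, hc1, hcv⟩
  have hk : v k ∈ affineSpan ℝ (convexHull ℝ (range v)) := by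
    rw [affineSpan_convexHull]
    exact subset_affineSpan ℝ _ (mem_range_self k)
  obtain ⟨t, htk, ht⟩ := ((eventually_smul_mem_of_zero_mem_intrinsicInterior h0 hk).filter_mono
    nhdsWithin_le_nhds |>.and self_mem_nhdsWithin).exists (f := 𝓝[<] (0 : ℝ))
  obtain ⟨b, ⟨hb0, hb1⟩, hbv⟩ := convexHull_range_eq_image_stdSimplex v ▸ htk
  -- `(1 - t) c` and `b - t 𝟙ₖ` are weights of the same total mass, both representing `0`.
  have hcoord := affineIndependent_iff.1 hv Finset.univ
    (fun i => (1 - t) * c i - (b i - if i = k then t else 0)) ?_ ?_ k (Finset.mem_univ k)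
  · simp only [ite_true] at hcoord
    nlinarith [hb0 k]
  · simp [Finset.sum_sub_distrib, ← Finset.mul_sum, hc1, hb1]
  · simp [sub_smul, mul_smul, Finset.sum_sub_distrib, ← Finset.smul_sum, hcv, hbv]

section

variable {V : Type*} [NormedAddCommGroup V] [InnerProductSpace ℝ V] {m : ℕ} {g : Fin m → V}

theorem inner_sum_smul_eq_of_mem_tangentSpaceOf {p : V} (hp : p ∈ tangentSpaceOf g)
    {c : Fin m → ℝ} (hc : ∑ i, c i = 1) (j : Fin m) : ⟪p, ∑ i, c i • g i⟫ = ⟪p, g j⟫ := by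
  have hpg (i : Fin m) : ⟪p, g i⟫ = ⟪p, g j⟫ := by
    rw [← sub_eq_zero, ← inner_sub_right]
    exact hp i j
  simp only [inner_sum, real_inner_smul_right, hpg, ← Finset.sum_mul, hc, one_mul]

theorem inner_eq_norm_sq_of_mem_convexHull {c : Fin m → ℝ} (hc : ∑ i, c i = 1)
    (hT : ∑ i, c i • g i ∈ tangentSpaceOf g) {w : V} (hw : w ∈ convexHull ℝ (range g)) :
    ⟪∑ i, c i • g i, w⟫ = ‖∑ i, c i • g i‖ ^ 2 := by
  set p := ∑ i, c i • g i
  -- `w ↦ ⟪p, w⟫` takes the value `‖p‖²` on every `g i`, hence on their convex hull.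
  refine convexHull_min ?_ (convex_hyperplane (innerₛₗ ℝ p).isLinear _) hw
  rintro _ ⟨j, rfl⟩
  change ⟪p, g j⟫ = ‖p‖ ^ 2
  rw [← real_inner_self_eq_norm_sq, inner_sum_smul_eq_of_mem_tangentSpaceOf hT hc j]

theorem norm_le_of_inner_eq_norm_sq {p w : V} (h : ⟪p, w⟫ = ‖p‖ ^ 2) : ‖p‖ ≤ ‖w‖ := by
  have := h ▸ real_inner_le_norm p w
  nlinarith [norm_nonneg p, norm_nonneg w]

theorem eq_of_inner_eq_norm_sq_of_norm_le {p w : V} (h : ⟪p, w⟫ = ‖p‖ ^ 2) (hw : ‖w‖ ≤ ‖p‖) :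
    w = p := by
  have hdist : ‖w - p‖ ^ 2 = ‖w‖ ^ 2 - ‖p‖ ^ 2 := by
    rw [norm_sub_sq_real, real_inner_comm, h]
    ring
  have hnonpos : ‖w - p‖ ^ 2 ≤ 0 := by nlinarith [norm_nonneg w]
  exact sub_eq_zero.1 (norm_eq_zero.1 (by nlinarith [norm_nonneg (w - p)]))

end

theorem minNorm_eq_of_unique {V : Type*} [NormedAddCommGroup V] {s : Set V} {p : V} (hp : p ∈ s)
    (hmin : ∀ w ∈ s, ‖p‖ ≤ ‖w‖) (huniq : ∀ w ∈ s, (∀ u ∈ s, ‖w‖ ≤ ‖u‖) → w = p) :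
    minNorm s = p := by
  have hex : ∃ v, v ∈ s ∧ ∀ w ∈ s, ‖v‖ ≤ ‖w‖ := ⟨p, hp, hmin⟩
  rw [minNorm, dif_pos hex]
  exact huniq _ hex.choose_spec.1 hex.choose_spec.2

theorem orthogonalProjectionOnto_tangentSpaceOf {m : ℕ} {g : Fin m → E} {c : Fin m → ℝ}
    (hc : ∑ i, c i = 1) (hT : ∑ i, c i • g i ∈ tangentSpaceOf g) (j : Fin m) :
    (Submodule.orthogonalProjectionOnto (tangentSpaceOf g) (g j) : E) = ∑ i, c i • g i := by
  rw [← Submodule.starProjection_apply]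
  refine Submodule.eq_starProjection_of_mem_of_inner_eq_zero hT fun w hw => ?_
  rw [inner_sub_left, real_inner_comm, ← inner_sum_smul_eq_of_mem_tangentSpaceOf hw hc j,
    real_inner_comm, sub_self]

theorem exists_orthogonalProjectionOnto_eq_minNorm {m : ℕ} {g : Fin m → E} {c : Fin m → ℝ}
    (hc0 : ∀ i, 0 ≤ c i) (hc : ∑ i, c i = 1) (hT : ∑ i, c i • g i ∈ tangentSpaceOf g) :
    ∃ p : E,
      (∀ i, (Submodule.orthogonalProjectionOnto (tangentSpaceOf g) (g i) : E) = p) ∧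
      p ∈ convexHull ℝ (range g) ∧
      (∀ w ∈ convexHull ℝ (range g), ‖p‖ ≤ ‖w‖) ∧
      (∀ w ∈ convexHull ℝ (range g), (∀ u ∈ convexHull ℝ (range g), ‖w‖ ≤ ‖u‖) → w = p) ∧
      p = minNorm (convexHull ℝ (range g)) := by
  have hp : ∑ i, c i • g i ∈ convexHull ℝ (range g) :=
    mem_convexHull_of_exists_fintype c g hc0 hc mem_range_self rfl
  have hmin (w) (hw : w ∈ convexHull ℝ (range g)) : ‖∑ i, c i • g i‖ ≤ ‖w‖ :=
    norm_le_of_inner_eq_norm_sq (inner_eq_norm_sq_of_mem_convexHull hc hT hw)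
  have huniq (w) (hw : w ∈ convexHull ℝ (range g))
      (hwmin : ∀ u ∈ convexHull ℝ (range g), ‖w‖ ≤ ‖u‖) : w = ∑ i, c i • g i :=
    eq_of_inner_eq_norm_sq_of_norm_le (inner_eq_norm_sq_of_mem_convexHull hc hT hw) (hwmin _ hp)
  exact ⟨_, orthogonalProjectionOnto_tangentSpaceOf hc hT, hp, hmin, huniq,
    (minNorm_eq_of_unique hp hmin huniq).symm⟩

section FootWeights

open Matrix

variable {V : Type*} [NormedAddCommGroup V] [InnerProductSpace ℝ V] {n : ℕ}

theorem mem_tangentSpaceOf_iff {g : Fin (n + 1) → V} {p : V} :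
    p ∈ tangentSpaceOf g ↔ ∀ k, ⟪p, g k - g 0⟫ = 0 := by
  refine ⟨fun hp k => hp k 0, fun hp i j => ?_⟩
  rw [← sub_sub_sub_cancel_right (g i) (g j) (g 0), inner_sub_right, hp i, hp j, sub_zero]

/-- Row `k` of the system `footMatrix g *ᵥ c = 1` reads `∑ c + ⟪∑ c • g, g k - g 0⟫ = 1`; row `0`
forces `∑ c = 1`, so the solutions are the affine weights of the foot of the perpendicular from
`0` to the affine span of the `g i`. -/
def footMatrix (g : Fin (n + 1) → V) : Matrix (Fin (n + 1)) (Fin (n + 1)) ℝ :=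
  Matrix.of fun k i => 1 + ⟪g i, g k - g 0⟫

noncomputable def footWeights (g : Fin (n + 1) → V) : Fin (n + 1) → ℝ :=
  (footMatrix g)⁻¹ *ᵥ 1

theorem footMatrix_mulVec (g : Fin (n + 1) → V) (c : Fin (n + 1) → ℝ) :
    footMatrix g *ᵥ c = fun k => ∑ i, c i + ⟪∑ i, c i • g i, g k - g 0⟫ := by
  ext k
  simp only [mulVec, dotProduct, footMatrix, of_apply, add_mul, one_mul, Finset.sum_add_distrib,
    sum_inner, real_inner_smul_left]
  exact congrArg _ (Finset.sum_congr rfl fun i _ => mul_comm _ _)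

theorem footMatrix_mulVec_eq_one_iff {g : Fin (n + 1) → V} {c : Fin (n + 1) → ℝ} :
    footMatrix g *ᵥ c = 1 ↔ ∑ i, c i = 1 ∧ ∑ i, c i • g i ∈ tangentSpaceOf g := by
  rw [footMatrix_mulVec, mem_tangentSpaceOf_iff, funext_iff]
  refine ⟨fun h => ?_, fun ⟨hc, hT⟩ k => by simp [hc, hT k]⟩
  have hc : ∑ i, c i = 1 := by simpa using h 0
  exact ⟨hc, fun k => by simpa [hc] using h k⟩

theorem AffineIndependent.det_footMatrix_ne_zero {g : Fin (n + 1) → V}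
    (hg : AffineIndependent ℝ g) : (footMatrix g).det ≠ 0 := by
  rw [Ne, ← Matrix.exists_mulVec_eq_zero_iff]
  rintro ⟨c, hc, hMc⟩
  rw [footMatrix_mulVec, funext_iff] at hMc
  have hsum : ∑ i, c i = 0 := by simpa using hMc 0
  have horth (k) : ⟪∑ i, c i • g i, g k - g 0⟫ = 0 := by simpa [hsum] using hMc k
  have hcomb : ∑ i, c i • g i = ∑ i, c i • (g i - g 0) := by
    simp [smul_sub, Finset.sum_sub_distrib, ← Finset.sum_smul, hsum]
  have hzero : ⟪∑ i, c i • g i, ∑ i, c i • g i⟫ = 0 := by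
    nth_rw 2 [hcomb]
    simp only [inner_sum, real_inner_smul_right, horth, mul_zero, Finset.sum_const_zero]
  exact hc (funext fun i => affineIndependent_iff.1 hg Finset.univ c hsum
    (inner_self_eq_zero.1 hzero) i (Finset.mem_univ i))

theorem footMatrix_mulVec_footWeights {g : Fin (n + 1) → V} (hg : (footMatrix g).det ≠ 0) :
    footMatrix g *ᵥ footWeights g = 1 := by
  rw [footWeights, Matrix.mulVec_mulVec, Matrix.mul_nonsing_inv _ hg.isUnit, Matrix.one_mulVec]

theorem footWeights_eq_of_mulVec_eq_one {g : Fin (n + 1) → V} (hg : (footMatrix g).det ≠ 0)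
    {c : Fin (n + 1) → ℝ} (hc : footMatrix g *ᵥ c = 1) : footWeights g = c := by
  rw [footWeights, ← hc, Matrix.mulVec_mulVec, Matrix.nonsing_inv_mul _ hg.isUnit,
    Matrix.one_mulVec]

theorem continuous_footMatrix : Continuous (footMatrix : (Fin (n + 1) → V) → _) :=
  continuous_matrix fun k i => continuous_const.add
    ((continuous_apply i).inner ((continuous_apply k).sub (continuous_apply 0)))

theorem eventually_footWeights_pos {X : Type*} [TopologicalSpace X] {g : X → Fin (n + 1) → V}
    {x₀ : X} (hg : ContinuousAt g x₀) (hind : AffineIndependent ℝ (g x₀))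
    (h0 : (0 : V) ∈ intrinsicInterior ℝ (convexHull ℝ (range (g x₀)))) :
    ∀ᶠ x in 𝓝 x₀, (footMatrix (g x)).det ≠ 0 ∧ ∀ i, 0 < footWeights (g x) i := by
  obtain ⟨c, hc0, hc1, hcv⟩ := hind.exists_pos_weights_of_zero_mem_intrinsicInterior h0
  have hdet := hind.det_footMatrix_ne_zero
  have hc : footWeights (g x₀) = c := footWeights_eq_of_mulVec_eq_one hdet
    (footMatrix_mulVec_eq_one_iff.2 ⟨hc1, hcv ▸ Submodule.zero_mem _⟩)
  have hM : ContinuousAt (fun x => footMatrix (g x)) x₀ :=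
    continuous_footMatrix.continuousAt.comp hg
  have hinv : ContinuousAt Inv.inv (footMatrix (g x₀)) :=
    continuousAt_matrix_inv _ (by rw [Ring.inverse_eq_inv']; exact continuousAt_inv₀ hdet)
  have hW : ContinuousAt (fun x => footWeights (g x)) x₀ :=
    (continuous_id.matrix_mulVec (continuous_const (y := (1 : Fin (n + 1) → ℝ)))).continuousAt.comp
      (hinv.comp_of_eq hM rfl)
  refine ((continuous_id.matrix_det.continuousAt.comp hM).eventually_ne hdet).and ?_
  refine eventually_all.2 fun i => ((continuous_apply i).continuousAt.comp hW).eventually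
    (lt_mem_nhds ?_)
  simpa [hc] using hc0 i

end FootWeights

theorem stmt15_general (f : E → ℝ) (xbar : E) {n : ℕ}
    (F : Fin (n + 1) → E → ℝ) (hF : IsStrongC2MaxAt f xbar F) :
    ∃ δ > 0, ∀ x : E, (∀ i j, F i x = F j x) → ‖x - xbar‖ ≤ δ →
      ∃ p : E,
        (∀ i, (Submodule.orthogonalProjectionOnto (tangentSpaceOf fun i => gradient (F i) x)
            (gradient (F i) x) : E) = p) ∧
        p ∈ convexHull ℝ (Set.range fun i => gradient (F i) x) ∧
        (∀ w ∈ convexHull ℝ (Set.range fun i => gradient (F i) x), ‖p‖ ≤ ‖w‖) ∧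
        (∀ w ∈ convexHull ℝ (Set.range fun i => gradient (F i) x),
          (∀ u ∈ convexHull ℝ (Set.range fun i => gradient (F i) x), ‖w‖ ≤ ‖u‖) →
          w = p) ∧
        p = minNorm (convexHull ℝ (Set.range fun i => gradient (F i) x)) := by
  obtain ⟨hC2, -, -, hindep, hrelint, -⟩ := hF
  have hgrad : Continuous fun x i => gradient (F i) x := continuous_pi fun i =>
    (InnerProductSpace.toDual ℝ E).symm.continuous.comp ((hC2 i).continuous_fderiv (by norm_num))
  obtain ⟨δ, hδ, hnear⟩ := Metric.nhds_basis_closedBall.eventually_iff.1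
    (eventually_footWeights_pos hgrad.continuousAt hindep hrelint)
  refine ⟨δ, hδ, fun x _ hx => ?_⟩
  obtain ⟨hdet, hpos⟩ := hnear (mem_closedBall_iff_norm.2 hx)
  obtain ⟨hsum, hT⟩ := footMatrix_mulVec_eq_one_iff.1 (footMatrix_mulVec_footWeights hdet)
  exact exists_orthogonalProjectionOnto_eq_minNorm (fun i => (hpos i).le) hsum hT

theorem stmt15 (f : E → ℝ) (hf : LocallyLipschitz f) (xbar : E) {n : ℕ}
    (F : Fin (n + 1) → E → ℝ) (hF : IsStrongC2MaxAt f xbar F) :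
    ∃ δ > 0, ∀ x : E, (∀ i j, F i x = F j x) → ‖x - xbar‖ ≤ δ →
      ∃ p : E,
        (∀ i, (Submodule.orthogonalProjectionOnto (tangentSpaceOf fun i => gradient (F i) x)
            (gradient (F i) x) : E) = p) ∧
        p ∈ convexHull ℝ (Set.range fun i => gradient (F i) x) ∧
        (∀ w ∈ convexHull ℝ (Set.range fun i => gradient (F i) x), ‖p‖ ≤ ‖w‖) ∧
        (∀ w ∈ convexHull ℝ (Set.range fun i => gradient (F i) x),
          (∀ u ∈ convexHull ℝ (Set.range fun i => gradient (F i) x), ‖w‖ ≤ ‖u‖) →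
          w = p) ∧
        p = minNorm (convexHull ℝ (Set.range fun i => gradient (F i) x)) :=
  stmt15_general f xbar F hF
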